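/- arXiv:2105.11966 — 3 statements merged into one kernel-verified Lean document; each statement's English description precedes it below -/
import Mathlib

section
/- The generalized bialgebra law between the Z and X structures holds with explicit scalar: for all m, n ≥ 1, as linear maps (ℂ²)^{⊗m} → (ℂ²)^{⊗n}, Δ_Z^{(n)} ∘ M_X^{(m)} = 2^{(m−1)(n−1)/2} · (M_X^{(m)})^{⊗n} ∘ P ∘ (Δ_Z^{(n)})^{⊗m}, where P is the unitary on (ℂ²)^{⊗mn} that permutes tensor factors by sending the factor in position (i−1)n + j to position (j−1)m + i for 1 ≤ i ≤ m, 1 ≤ j ≤ n. -/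
noncomputable section

/-- The qubit space ℂ², modeled as functions `Fin 2 → ℂ`. -/
abbrev Qubit : Type := Fin 2 → ℂ

/-- The two-qubit space ℂ² ⊗ ℂ², modeled as `Fin 2 × Fin 2 → ℂ`. -/
abbrev Q2 : Type := Fin 2 × Fin 2 → ℂ

/-- The standard basis e₀, e₁ of ℂ². -/
def ket (j : Fin 2) : Qubit := fun k => if k = j then 1 else 0

/-- √2 as a complex number. -/
def s2 : ℂ := Real.sqrt 2

/-- The Pauli-X eigenbasis x_j = (e₀ + (−1)^j e₁)/√2. -/
def xb (j : Fin 2) : Qubit := s2⁻¹ • (ket 0 + ((-1 : ℂ) ^ (j : ℕ)) • ket 1)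

/-- The Pauli-Y eigenbasis y_j = (e₀ + (−1)^j i e₁)/√2. -/
def yb (j : Fin 2) : Qubit := s2⁻¹ • (ket 0 + ((-1 : ℂ) ^ (j : ℕ) * Complex.I) • ket 1)

/-- Inner product on ℂ², conjugate-linear in the first argument. -/
def inp (v w : Qubit) : ℂ := ∑ k : Fin 2, starRingEnd ℂ (v k) * w k

/-- Tensor product of two qubit vectors. -/
def tp (v w : Qubit) : Q2 := fun p => v p.1 * w p.2

/-- Inner product on ℂ² ⊗ ℂ², conjugate-linear in the first argument. -/
def inp2 (v w : Q2) : ℂ := ∑ p : Fin 2 × Fin 2, starRingEnd ℂ (v p) * w p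

/-- The copy map δ_b of an orthonormal basis b: v ↦ Σ_j ⟨b_j, v⟩ (b_j ⊗ b_j). -/
def copyM (b : Fin 2 → Qubit) (v : Qubit) : Q2 :=
  fun p => ∑ j : Fin 2, inp (b j) v * (b j p.1 * b j p.2)

/-- The multiplication m_b of an orthonormal basis b (the adjoint of δ_b):
    w ↦ Σ_j ⟨b_j ⊗ b_j, w⟩ b_j. -/
def multM (b : Fin 2 → Qubit) (w : Q2) : Qubit :=
  fun k => ∑ j : Fin 2, inp2 (tp (b j) (b j)) w * b j k

/-- The N-qubit space (ℂ²)^{⊗m}, modeled as `(Fin m → Fin 2) → ℂ`. -/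
abbrev QN (m : ℕ) : Type := (Fin m → Fin 2) → ℂ

/-- Inner product on (ℂ²)^{⊗m}, conjugate-linear in the first argument. -/
def innerN {m : ℕ} (v w : QN m) : ℂ := ∑ f : Fin m → Fin 2, starRingEnd ℂ (v f) * w f

/-- The m-fold tensor power x_j^{⊗m} of the Pauli-X eigenvector x_j. -/
def xpow (m : ℕ) (j : Fin 2) : QN m := fun f => ∏ i : Fin m, xb j (f i)

/-- The m-ary X-multiplication M_X^{(m)} : (ℂ²)^{⊗m} → ℂ²,
w ↦ Σ_j ⟨x_j^{⊗m}, w⟩ x_j. -/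
def MX (m : ℕ) (w : QN m) : Qubit := fun k => ∑ j : Fin 2, innerN (xpow m j) w * xb j k

/-- The n-ary Z-copy Δ_Z^{(n)} : ℂ² → (ℂ²)^{⊗n}, the linear map determined by
e_j ↦ e_j^{⊗n}. -/
def deltaN (n : ℕ) (v : Qubit) : QN n :=
  fun f => ∑ j : Fin 2, v j * ∏ i : Fin n, (if f i = j then (1 : ℂ) else 0)

/-- The m-fold tensor power f^{⊗m} of a linear map f, on function-model tensor
spaces: the unique linear extension of e_h ↦ ⊗_i f(e_{h i}). -/
def tpow {ι κ : Type} [Fintype ι] [DecidableEq ι] (m : ℕ) (f : (ι → ℂ) → (κ → ℂ)) :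
    ((Fin m → ι) → ℂ) → ((Fin m → κ) → ℂ) :=
  fun w g => ∑ h : Fin m → ι, w h * ∏ i : Fin m, f (fun a => if a = h i then 1 else 0) (g i)

/-- The permutation unitary P on (ℂ²)^{⊗mn} sending the tensor factor in
position (i,j) (i.e. (i−1)n + j) to position (j,i) (i.e. (j−1)m + i):
in the function model, precomposition of indices with the transpose. -/
def transposeMap (m n : ℕ) :
    ((Fin m → Fin n → Fin 2) → ℂ) → ((Fin n → Fin m → Fin 2) → ℂ) :=
  fun w g => w (fun i j => g j i)

namespace BialgAux

lemma s2_sq : s2 ^ 2 = 2 := by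
  simp [s2, ← Complex.ofReal_pow, Real.sq_sqrt (by norm_num : (2:ℝ) ≥ 0)]

lemma s2_ne : s2 ≠ 0 := by
  simp [s2, Complex.ofReal_ne_zero]

lemma xb_eq (j k : Fin 2) : xb j k = s2⁻¹ * ((-1:ℂ) ^ (k:ℕ)) ^ (j:ℕ) := by
  fin_cases j <;> fin_cases k <;> simp [xb, ket]

lemma xb_conj (j k : Fin 2) : starRingEnd ℂ (xb j k) = xb j k := by
  rw [xb_eq]
  simp [s2, map_inv₀, Complex.conj_ofReal, map_pow]

/-- sign of a bit string -/
def eps {m : ℕ} (h : Fin m → Fin 2) : ℂ := ∏ i, (-1 : ℂ) ^ ((h i : ℕ))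

lemma eps_pm {m : ℕ} (h : Fin m → Fin 2) : eps h = 1 ∨ eps h = -1 := by
  unfold eps
  rw [Finset.prod_pow_eq_pow_sum]
  rcases Nat.even_or_odd (∑ i ∈ Finset.univ, (h i : ℕ)) with he | ho
  · left; exact he.neg_one_pow
  · right; exact ho.neg_one_pow

lemma xprod (m : ℕ) (j : Fin 2) (f : Fin m → Fin 2) :
    ∏ i, xb j (f i) = s2⁻¹ ^ m * (eps f) ^ (j:ℕ) := by
  simp only [xb_eq]
  rw [Finset.prod_mul_distrib, Finset.prod_const, Finset.card_univ, Fintype.card_fin]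
  congr 1
  rw [Finset.prod_pow, eps]

end BialgAux
namespace BialgAux

lemma MX_apply (m : ℕ) (w : QN m) (k : Fin 2) :
    MX m w k = s2⁻¹ ^ (m + 1) * ∑ h, w h * (1 + eps h * (-1:ℂ) ^ (k:ℕ)) := by
  unfold MX innerN xpow
  have hstar : ∀ (j : Fin 2) (f : Fin m → Fin 2),
      starRingEnd ℂ (∏ i, xb j (f i)) = s2⁻¹ ^ m * (eps f) ^ (j:ℕ) := by
    intro j f
    rw [map_prod]
    simp_rw [xb_conj]
    exact xprod m j f
  simp_rw [hstar]
  rw [Fin.sum_univ_two]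
  simp only [xb_eq]
  rw [Finset.sum_mul, Finset.sum_mul, ← Finset.sum_add_distrib, Finset.mul_sum]
  apply Finset.sum_congr rfl
  intro f _
  simp only [Fin.val_zero, Fin.val_one, pow_zero, pow_one]
  ring

lemma deltaN_apply (n : ℕ) (v : Qubit) (g : Fin n → Fin 2) :
    deltaN n v g = ∑ j, v j * (if ∀ i, g i = j then 1 else 0) := by
  unfold deltaN
  apply Finset.sum_congr rfl
  intro j _
  rw [Finset.prod_boole]
  simp

lemma deltaN_ket (n : ℕ) (c : Fin 2) (f : Fin n → Fin 2) :
    deltaN n (ket c) f = if ∀ i, f i = c then 1 else 0 := by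
  rw [deltaN_apply, Fin.sum_univ_two]
  fin_cases c <;> simp [ket]

lemma MX_dket (m : ℕ) (h : Fin m → Fin 2) (k : Fin 2) :
    MX m (fun a => if a = h then 1 else 0) k
      = s2⁻¹ ^ (m + 1) * (1 + eps h * (-1:ℂ) ^ (k:ℕ)) := by
  rw [MX_apply]
  congr 1
  simp [ite_mul, Finset.sum_ite_eq']

end BialgAux
namespace BialgAux

lemma rhs_eval (m n : ℕ) (w : QN m) (g : Fin n → Fin 2) :
    tpow n (MX m) (transposeMap m n (tpow m (deltaN n) w)) g
      = ∑ h : Fin m → Fin 2,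
          w h * (s2⁻¹ ^ ((m+1)*n) * ∏ j, (1 + eps h * (-1:ℂ) ^ ((g j : ℕ)))) := by
  unfold tpow transposeMap
  beta_reduce
  have hket : ∀ (c : Fin 2) (f : Fin n → Fin 2),
      deltaN n (fun a => if a = c then (1:ℂ) else 0) f = if ∀ i, f i = c then 1 else 0 := by
    intro c f; exact deltaN_ket n c f
  simp_rw [hket, Finset.prod_boole]
  have hiff : ∀ (H : Fin n → Fin m → Fin 2) (h : Fin m → Fin 2),
      (∀ i, ∀ j, H j i = h i) ↔ H = (fun _ => h) := by
    intro H h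
    simp only [funext_iff]
    exact forall_comm
  simp only [Finset.mem_univ, true_implies]
  simp_rw [hiff, Finset.sum_mul]
  rw [Finset.sum_comm]
  apply Finset.sum_congr rfl
  intro h _
  have step : ∀ H : Fin n → Fin m → Fin 2,
      (w h * if H = (fun _ => h) then (1:ℂ) else 0)
          * ∏ i, MX m (fun a => if a = H i then 1 else 0) (g i)
        = if H = (fun _ => h) then
            w h * ∏ i, MX m (fun a => if a = H i then 1 else 0) (g i) else 0 := by
    intro H; split <;> simp
  simp_rw [step]
  rw [Finset.sum_ite_eq' Finset.univ (fun _ => h : Fin n → Fin m → Fin 2)]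
  simp only [Finset.mem_univ, if_true]
  simp_rw [MX_dket]
  rw [Finset.prod_mul_distrib, Finset.prod_const, Finset.card_univ, Fintype.card_fin,
    ← pow_mul]

end BialgAux
namespace BialgAux

lemma powkey (a b : ℕ) :
    s2⁻¹ ^ (a + 1 + 1) * 2 = s2 ^ (a * b) * (s2⁻¹ ^ ((a + 1 + 1) * (b + 1)) * 2 ^ (b + 1)) := by
  have h2 : (2:ℂ) = s2 ^ 2 := s2_sq.symm
  rw [h2, inv_pow, inv_pow]
  have hne : ∀ k : ℕ, s2 ^ k ≠ 0 := fun k => pow_ne_zero _ s2_ne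
  field_simp
  rw [div_eq_div_iff (hne _) (hne _), ← pow_mul, ← pow_add, ← pow_add, ← pow_add]
  congr 1
  ring

lemma key (a b : ℕ) (ε : ℂ) (hε : ε = 1 ∨ ε = -1) (g : Fin (b+1) → Fin 2) :
    s2⁻¹ ^ (a + 1 + 1) *
        ∑ j : Fin 2, (1 + ε * (-1:ℂ) ^ (j:ℕ)) * (if ∀ i, g i = j then (1:ℂ) else 0)
      = s2 ^ (a * b) *
          (s2⁻¹ ^ ((a + 1 + 1) * (b + 1)) * ∏ j, (1 + ε * (-1:ℂ) ^ ((g j : ℕ)))) := by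
  rcases hε with rfl | rfl
  · have hfac : ∀ k : Fin 2, (1 + (1:ℂ) * (-1) ^ (k:ℕ)) = if k = 0 then 2 else 0 := by
      intro k; fin_cases k <;> norm_num
    simp_rw [hfac]
    rw [Fin.sum_univ_two]
    have hsplit : ∀ j : Fin (b+1), (if g j = 0 then (2:ℂ) else 0)
        = 2 * (if g j = 0 then 1 else 0) := by intro j; split <;> ring
    simp_rw [hsplit]
    rw [Finset.prod_mul_distrib, Finset.prod_const, Finset.card_univ, Fintype.card_fin,
      Finset.prod_boole]
    simp only [Finset.mem_univ, true_implies]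
    by_cases hc : ∀ i, g i = 0 <;> simp [hc, Fin.one_eq_zero_iff]
    · linear_combination powkey a b
  · have hfac : ∀ k : Fin 2, (1 + (-1:ℂ) * (-1) ^ (k:ℕ)) = if k = 1 then 2 else 0 := by
      intro k; fin_cases k <;> norm_num
    simp_rw [hfac]
    rw [Fin.sum_univ_two]
    have hsplit : ∀ j : Fin (b+1), (if g j = 1 then (2:ℂ) else 0)
        = 2 * (if g j = 1 then 1 else 0) := by intro j; split <;> ring
    simp_rw [hsplit]
    rw [Finset.prod_mul_distrib, Finset.prod_const, Finset.card_univ, Fintype.card_fin,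
      Finset.prod_boole]
    simp only [Finset.mem_univ, true_implies]
    by_cases hc : ∀ i, g i = 1 <;> simp [hc, Fin.zero_eq_one_iff]
    · linear_combination powkey a b

end BialgAux

open BialgAux in
/-- the generalized bialgebra law between the Z and X structures
holds with explicit scalar: for m, n ≥ 1,
Δ_Z^{(n)} ∘ M_X^{(m)} = 2^{(m−1)(n−1)/2} · (M_X^{(m)})^{⊗n} ∘ P ∘ (Δ_Z^{(n)})^{⊗m},
where 2^{(m−1)(n−1)/2} = (√2)^{(m−1)(n−1)}. -/
theorem generalized_bialgebra_Z_X (m n : ℕ) (hm : 1 ≤ m) (hn : 1 ≤ n) :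
    ∀ w : QN m,
      deltaN n (MX m w) =
        (s2 ^ ((m - 1) * (n - 1))) •
          tpow n (MX m) (transposeMap m n (tpow m (deltaN n) w)) := by
  obtain ⟨a, rfl⟩ : ∃ a, m = a + 1 := ⟨m - 1, by omega⟩
  obtain ⟨b, rfl⟩ : ∃ b, n = b + 1 := ⟨n - 1, by omega⟩
  intro w
  funext g
  simp only [Nat.add_sub_cancel]
  rw [Pi.smul_apply, smul_eq_mul, rhs_eval, Finset.mul_sum, deltaN_apply]
  simp_rw [MX_apply, Finset.mul_sum, Finset.sum_mul]
  rw [Finset.sum_comm]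
  apply Finset.sum_congr rfl
  intro h _
  have hk := key a b (eps h) (eps_pm h) g
  rw [Fin.sum_univ_two] at hk ⊢
  linear_combination w h * hk
end
end

section
/- The binary multiplication of the Pauli-Y classical structure equals the X multiplication precomposed with a controlled-Z gate, with no scalar correction: m_Y = m_X ∘ CZ as linear maps ℂ² ⊗ ℂ² → ℂ². Equivalently, on the standard basis, (m_X ∘ CZ)(e_j ⊗ e_k) = (1/√2)·(−1)^{jk} e_{j⊕k} = m_Y(e_j ⊗ e_k) for all j, k ∈ {0,1}. -/
noncomputable section

def CZ (w : Q2) : Q2 := fun p => (-1 : ℂ) ^ ((p.1 : ℕ) * (p.2 : ℕ)) * w p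

lemma conj_s2 : starRingEnd ℂ s2 = s2 := by
  simp [s2]

lemma conj_s2inv : starRingEnd ℂ s2⁻¹ = s2⁻¹ := by
  simp [s2, ← Complex.ofReal_inv]

lemma s2inv_sq : s2⁻¹ * s2⁻¹ = 2⁻¹ := by
  rw [← mul_inv]
  norm_num [s2, ← Complex.ofReal_mul, Real.mul_self_sqrt]

set_option maxHeartbeats 1000000 in
/-- the binary Y-multiplication equals the X-multiplication
precomposed with a controlled-Z gate, with no scalar correction: m_Y = m_X ∘ CZ;
equivalently, on the standard basis,
(m_X ∘ CZ)(e_j ⊗ e_k) = (1/√2)(−1)^{jk} e_{j⊕k} = m_Y(e_j ⊗ e_k). -/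
theorem mY_eq_mX_comp_CZ :
    (∀ w : Q2, multM yb w = multM xb (CZ w)) ∧
    (∀ j k : Fin 2,
      multM xb (CZ (tp (ket j) (ket k))) =
          (s2⁻¹ * (-1 : ℂ) ^ ((j : ℕ) * (k : ℕ))) • ket (j + k) ∧
      multM yb (tp (ket j) (ket k)) =
          (s2⁻¹ * (-1 : ℂ) ^ ((j : ℕ) * (k : ℕ))) • ket (j + k)) := by
  constructor
  · intro w
    funext k
    fin_cases k <;>
      simp [multM, yb, xb, CZ, tp, inp2, inp, ket, Fin.sum_univ_two, Fintype.sum_prod_type, conj_s2inv,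
        Complex.conj_I, Prod.ext_iff] <;> ring_nf <;> simp [Complex.I_sq] <;> ring
  · intro j k
    constructor <;> funext m <;>
      fin_cases j <;> fin_cases k <;> fin_cases m <;>
      simp [multM, yb, xb, CZ, tp, inp2, inp, ket, Fin.sum_univ_two, Fintype.sum_prod_type, conj_s2inv,
        Complex.conj_I, Prod.ext_iff] <;>
      ring_nf <;> simp [s2inv_sq, Complex.I_sq] <;> ring_nf <;> simp [pow_succ, s2inv_sq] <;> simp [conj_s2, sq, s2inv_sq] <;> ring
end
end

section
/- The candidate Y spiders fuse: writing M_k := M_X^{(k)} ∘ CZ_k : (ℂ²)^{⊗k} → ℂ² for k ≥ 1, one has for every m ≥ 2 the exact identity M_{m+1} = M_m ∘ (M_2 ⊗ id^{⊗(m−1)}) of linear maps (ℂ²)^{⊗(m+1)} → ℂ², i.e. composing the binary map M_2 onto the first input of M_m yields M_{m+1}. -/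
noncomputable section

/-- The number of ones c₁(f) of a bit string f. -/
def c1 {m : ℕ} (f : Fin m → Fin 2) : ℕ := (Finset.univ.filter (fun i => f i = 1)).card

/-- The number of (unordered) pairs of positions both carrying a one. -/
def pairCount {m : ℕ} (f : Fin m → Fin 2) : ℕ :=
  (Finset.univ.filter (fun p : Fin m × Fin m => p.1 < p.2 ∧ f p.1 = 1 ∧ f p.2 = 1)).card

/-- CZ_m, the composition of controlled-Z gates on all pairs of tensor factors:
it acts diagonally by CZ_m(e_f) = (−1)^{#{(i,i') : i<i', f i = f i' = 1}} e_f. -/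
def CZm (m : ℕ) (w : QN m) : QN m := fun f => (-1 : ℂ) ^ pairCount f * w f

/-- The standard basis vector e_f = e_{f 0} ⊗ ⋯ ⊗ e_{f (m−1)} of (ℂ²)^{⊗m}. -/
def indN {m : ℕ} (f : Fin m → Fin 2) : QN m := fun g => if g = f then 1 else 0

/-- The coefficient of M_2 = M_X^{(2)} ∘ CZ_2 on the basis vector e_a ⊗ e_b,
evaluated at the output index c. -/
def M2coef (a b c : Fin 2) : ℂ := MX 2 (CZm 2 (indN ![a, b])) c

/-- The map M_2 ⊗ id^{⊗(n+1)} : (ℂ²)^{⊗(n+3)} → (ℂ²)^{⊗(n+2)}, applying the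
binary map M_2 to the first two tensor factors and the identity elsewhere
(the unique linear extension of e_a ⊗ e_b ⊗ u ↦ M_2(e_a ⊗ e_b) ⊗ u). -/
def M2tensorId (n : ℕ) (w : QN (n + 2)) : QN (n + 1) :=
  fun g => ∑ a : Fin 2, ∑ b : Fin 2,
    M2coef a b (g 0) * w (Fin.cons a (Fin.cons b (fun i : Fin n => g i.succ)))

lemma s2_sq : s2 * s2 = 2 := by
  simp only [s2]
  rw [← Complex.ofReal_mul]
  norm_num [Real.mul_self_sqrt]

lemma s2_ne : s2 ≠ 0 := by
  intro h
  have := s2_sq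
  rw [h] at this
  norm_num at this

lemma xb_val (j i : Fin 2) : xb j i = s2⁻¹ * (-1 : ℂ) ^ ((j : ℕ) * (i : ℕ)) := by
  fin_cases j <;> fin_cases i <;> simp [xb, ket]

lemma xb_real (j i : Fin 2) : starRingEnd ℂ (xb j i) = xb j i := by
  rw [xb_val]
  simp [s2, ← Complex.ofReal_inv, ← Complex.ofReal_neg, ← Complex.ofReal_pow,
    Complex.conj_ofReal]

lemma xb_mul (j a b : Fin 2) : xb j a * xb j b = s2⁻¹ * xb j (a + b) := by
  fin_cases j <;> fin_cases a <;> fin_cases b <;>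
    simp [xb_val] <;> ring

lemma innerN_xpow {m : ℕ} (j : Fin 2) (v : QN m) :
    innerN (xpow m j) v = ∑ f : Fin m → Fin 2, (∏ i, xb j (f i)) * v f := by
  unfold innerN xpow
  refine Finset.sum_congr rfl fun f _ => ?_
  rw [map_prod]
  simp [xb_real]

lemma sum_pi_succ {M : Type*} [AddCommMonoid M] {m : ℕ}
    (F : (Fin (m + 1) → Fin 2) → M) :
    ∑ f, F f = ∑ a : Fin 2, ∑ h : Fin m → Fin 2, F (Fin.cons a h) := by
  calc ∑ f, F f
      = ∑ p : Fin 2 × (Fin m → Fin 2), F (Fin.cons p.1 p.2) :=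
        (Fintype.sum_equiv (Fin.consEquiv fun _ => Fin 2) _ _ fun p => rfl).symm
    _ = _ := Fintype.sum_prod_type _

lemma c1_cons {m : ℕ} (a : Fin 2) (h : Fin m → Fin 2) :
    c1 (Fin.cons a h) = (a : ℕ) + c1 h := by
  unfold c1
  rw [Finset.card_filter, Finset.card_filter, Fin.sum_univ_succ]
  simp only [Fin.cons_zero, Fin.cons_succ]
  congr 1
  fin_cases a <;> simp

lemma pairCount_cons {m : ℕ} (a : Fin 2) (h : Fin m → Fin 2) :
    pairCount (Fin.cons a h) = (a : ℕ) * c1 h + pairCount h := by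
  unfold pairCount
  rw [Finset.card_filter, Finset.card_filter, Fintype.sum_prod_type, Fin.sum_univ_succ]
  congr 1
  · rw [Fin.sum_univ_succ]
    simp only [Fin.cons_zero, Fin.cons_succ]
    rw [c1, Finset.card_filter]
    fin_cases a <;> simp [Fin.succ_pos]
  · rw [Fintype.sum_prod_type]
    refine Finset.sum_congr rfl fun i _ => ?_
    rw [Fin.sum_univ_succ]
    simp [Fin.cons_succ, Fin.succ_lt_succ_iff, Fin.not_lt_zero]

lemma pc_pair : ∀ x y : Fin 2, pairCount ![x, y] = (x : ℕ) * (y : ℕ) := by decide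

lemma M2coef_eq (a b c : Fin 2) :
    M2coef a b c = if c = a + b then (-1 : ℂ) ^ ((a : ℕ) * (b : ℕ)) * s2⁻¹ else 0 := by
  unfold M2coef MX
  have h : ∀ j : Fin 2, innerN (xpow 2 j) (CZm 2 (indN ![a, b]))
      = xb j a * xb j b * (-1 : ℂ) ^ ((a : ℕ) * (b : ℕ)) := by
    intro j
    rw [innerN_xpow]
    unfold CZm indN
    simp only [mul_ite, mul_one, mul_zero, Finset.sum_ite_eq', Finset.mem_univ, if_true]
    rw [pc_pair]
    simp [Fin.prod_univ_two, mul_comm]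
  simp only [h]
  have aux2 : s2⁻¹ * s2⁻¹ = (2 : ℂ)⁻¹ := by rw [← mul_inv, s2_sq]
  fin_cases a <;> fin_cases b <;> fin_cases c <;>
    · simp [Fin.sum_univ_two, xb_val]
      try (rw [aux2]; ring_nf)

lemma key (j a b : Fin 2) (n p : ℕ) :
    xb j a * xb j b * (-1 : ℂ) ^ ((a : ℕ) * ((b : ℕ) + n) + ((b : ℕ) * n + p))
      = xb j (a + b) *
        ((-1 : ℂ) ^ ((((a + b) : Fin 2) : ℕ) * n + p)
          * ((-1 : ℂ) ^ ((a : ℕ) * (b : ℕ)) * s2⁻¹)) := by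
  have hnn : (-1 : ℂ) ^ n * (-1 : ℂ) ^ n = 1 := by
    rw [← pow_add, ← two_mul, pow_mul]
    norm_num
  rw [xb_mul]
  fin_cases a <;> fin_cases b <;>
    simp [pow_add, pow_mul] <;> ring_nf <;>
      simp [pow_add, hnn] <;> ring_nf

lemma sum_swap3 {M : Type*} [AddCommMonoid M] {α β γ : Type*}
    [Fintype α] [Fintype β] [Fintype γ] (F : α → β → γ → M) :
    ∑ a, ∑ b, ∑ c, F a b c = ∑ b, ∑ c, ∑ a, F a b c := by
  rw [Finset.sum_comm]
  exact Finset.sum_congr rfl fun b _ => Finset.sum_comm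

lemma sum_swap4 {M : Type*} [AddCommMonoid M] {α β γ δ : Type*}
    [Fintype α] [Fintype β] [Fintype γ] [Fintype δ] (F : α → β → γ → δ → M) :
    ∑ a, ∑ b, ∑ c, ∑ d, F a b c d = ∑ b, ∑ c, ∑ d, ∑ a, F a b c d := by
  rw [Finset.sum_comm]
  exact Finset.sum_congr rfl fun b _ => sum_swap3 _

lemma sum_swap5 {M : Type*} [AddCommMonoid M] {α β γ δ ε : Type*}
    [Fintype α] [Fintype β] [Fintype γ] [Fintype δ] [Fintype ε]
    (F : α → β → γ → δ → ε → M) :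
    ∑ a, ∑ b, ∑ c, ∑ d, ∑ e, F a b c d e
      = ∑ b, ∑ c, ∑ d, ∑ e, ∑ a, F a b c d e := by
  rw [Finset.sum_comm]
  exact Finset.sum_congr rfl fun b _ => sum_swap4 _

/-- the candidate Y spiders M_k := M_X^{(k)} ∘ CZ_k fuse: for every
m ≥ 2 (here m = k+2), M_{m+1} = M_m ∘ (M_2 ⊗ id^{⊗(m−1)}) as linear maps
(ℂ²)^{⊗(m+1)} → ℂ². -/
theorem Y_candidate_spiders_fuse (k : ℕ) :
    ∀ w : QN (k + 3),
      MX (k + 3) (CZm (k + 3) w) = MX (k + 2) (CZm (k + 2) (M2tensorId (k + 1) w)) := by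
  intro w
  funext c
  simp only [MX]
  refine Finset.sum_congr rfl fun j _ => ?_
  congr 1
  rw [innerN_xpow, innerN_xpow]
  simp only [CZm, M2tensorId, sum_pi_succ, Fin.prod_univ_succ, Fin.cons_zero, Fin.cons_succ,
    pairCount_cons, c1_cons, M2coef_eq, Finset.mul_sum, ite_mul, zero_mul, mul_ite, mul_zero]
  conv_rhs => rw [sum_swap5]
  simp only [Finset.sum_ite_eq', Finset.mem_univ, if_true]
  conv_rhs => rw [sum_swap4]
  conv_rhs => rw [sum_swap4]
  refine Finset.sum_congr rfl fun a _ => ?_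
  refine Finset.sum_congr rfl fun b _ => ?_
  refine Finset.sum_congr rfl fun e _ => ?_
  refine Finset.sum_congr rfl fun h _ => ?_
  linear_combination
    (xb j e * (∏ i, xb j (h i)) * w (Fin.cons a (Fin.cons b (Fin.cons e h)))) *
      key j a b ((e : ℕ) + c1 h) ((e : ℕ) * c1 h + pairCount h)
end
end
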